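/- Let V be a module over the twisted N=1 Schrödinger-Neveu-Schwarz algebra and let v ∈ V satisfy G_{1/2}v = Y_{1/2}v = M_{1/2}v = 0. Then Y_p v = 0 and M_p v = 0 for all p ∈ (1/2)ℤ with p > 0. -/

import Mathlib

noncomputable section

/-- Basis of the twisted N=1 Schrodinger-Neveu-Schwarz algebra.
`L n` is L_n, `G k` is G_{k+1/2}, `Y p` is Y_{p/2}, `M p` is M_{p/2}, `C` is the central element. -/
inductive B : Type
  | L : ℤ → B
  | G : ℤ → B
  | Y : ℤ → B
  | M : ℤ → B
  | C : B
deriving DecidableEq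

/-- The underlying vector space of tsns. -/
abbrev V := B →₀ ℂ

/-- Basis vectors. -/
def e (x : B) : V := Finsupp.single x 1

/-- Parity of a basis element. -/
def isOdd : B → Bool
  | .G _ => true
  | .Y p => if p % 2 = 0 then false else true
  | .M p => if p % 2 = 0 then false else true
  | _ => false

/-- The Koszul sign (-1)^{|x||y|}. -/
def sgn (x y : B) : ℂ := if isOdd x && isOdd y then -1 else 1

/-- The super-bracket on basis elements of tsns. -/
def bb : B → B → V
  | .L n, .L m => ((m : ℂ) - n) • e (.L (n+m)) +
      (if m = -n then (((n:ℂ)^3 - (n:ℂ))/12) • e B.C else 0)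
  | .L n, .G k => ((k : ℂ) + 1/2 - (n:ℂ)/2) • e (.G (k+n))
  | .G k, .L n => (-((k : ℂ) + 1/2 - (n:ℂ)/2)) • e (.G (k+n))
  | .G k, .G l => (2:ℂ) • e (.L (k+l+1)) +
      (if l = -k-1 then ((1 - 4*((k:ℂ)+1/2)^2)/12) • e B.C else 0)
  | .L n, .Y p => (if p % 2 = 0 then (p:ℂ)/2 - (n:ℂ)/2 else (p:ℂ)/2) • e (.Y (p + 2*n))
  | .Y p, .L n => (-(if p % 2 = 0 then (p:ℂ)/2 - (n:ℂ)/2 else (p:ℂ)/2)) • e (.Y (p + 2*n))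
  | .L n, .M p => (if p % 2 = 0 then (p:ℂ)/2 else (p:ℂ)/2 + (n:ℂ)/2) • e (.M (p + 2*n))
  | .M p, .L n => (-(if p % 2 = 0 then (p:ℂ)/2 else (p:ℂ)/2 + (n:ℂ)/2)) • e (.M (p + 2*n))
  | .G k, .Y p => (if p % 2 = 0 then ((p:ℂ)/2 - ((k:ℂ)+1/2))/2 else 2) • e (.Y (p + 2*k + 1))
  | .Y p, .G k => (if p % 2 = 0 then -(((p:ℂ)/2 - ((k:ℂ)+1/2))/2) else 2) • e (.Y (p + 2*k + 1))
  | .G k, .M p => (if p % 2 = 0 then (p:ℂ)/4 else 2) • e (.M (p + 2*k + 1))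
  | .M p, .G k => (if p % 2 = 0 then -((p:ℂ)/4) else 2) • e (.M (p + 2*k + 1))
  | .Y p, .Y q => (if p % 2 = 0 then (if q % 2 = 0 then ((q:ℂ) - p)/4 else (q:ℂ)/4)
      else (if q % 2 = 0 then -((p:ℂ)/4) else 2)) • e (.M (p + q))
  | _, _ => 0

/-- Bilinear extension of the bracket to all of tsns. -/
def br (f g : V) : V := f.sum fun x a => g.sum fun y b => (a * b) • bb x y

/-- Linear extension of an assignment of operators to basis elements. -/
def ext {W : Type} [AddCommGroup W] [Module ℂ W] (ρ : B → Module.End ℂ W) (f : V) :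
    Module.End ℂ W := f.sum fun x a => a • ρ x

/-- A module (representation) over the twisted N=1 Schrodinger-Neveu-Schwarz algebra. -/
structure TsnsRep (W : Type) [AddCommGroup W] [Module ℂ W] where
  ρ : B → Module.End ℂ W
  compat : ∀ x y : B, ext ρ (bb x y) = ρ x * ρ y - sgn x y • (ρ y * ρ x)

/-- Simplicity (irreducibility) of a tsns-module. -/
def TsnsSimple {W : Type} [AddCommGroup W] [Module ℂ W] (r : TsnsRep W) : Prop :=
  (∃ w : W, w ≠ 0) ∧
    ∀ U : Submodule ℂ W, (∀ x : B, ∀ u ∈ U, r.ρ x u ∈ U) → U = ⊥ ∨ U = ⊤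


/-! If `G_{1/2} v = 0` and `X v = 0`, then `[G_{1/2}, X] v = 0`. Bracketing with `G_{1/2}` sends
`Y_p` to a nonzero multiple of `Y_{p+1/2}` for every `p`, and `M_p` to a nonzero multiple of
`M_{p+1/2}` as long as `p ≠ 0`, so induction upward from `Y_{1/2}` and `M_{1/2}` kills all
positive modes. -/

variable {W : Type} [AddCommGroup W] [Module ℂ W]

lemma ext_smul_e (ρ : B → Module.End ℂ W) (c : ℂ) (z : B) : ext ρ (c • e z) = c • ρ z := by
  rw [show c • e z = Finsupp.single z c by simp [e]]
  exact Finsupp.sum_single_index (zero_smul ℂ _)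

lemma bb_G_zero_Y (p : ℤ) : ∃ c ≠ (0 : ℂ), bb (.G 0) (.Y p) = c • e (.Y (p + 1)) := by
  rcases Int.emod_two_eq_zero_or_one p with hp | hp
  · -- `(p - 1) / 4` vanishes only at the odd index `p = 1`
    have hp1 : (p : ℂ) ≠ 1 := by exact_mod_cast (by omega : p ≠ 1)
    refine ⟨((p : ℂ) - 1) / 4, div_ne_zero (sub_ne_zero.mpr hp1) (by norm_num), ?_⟩
    simp only [bb, hp, if_true, Int.cast_zero, mul_zero, add_zero]
    congr 1
    ring
  · exact ⟨2, two_ne_zero, by simp [bb, hp]⟩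

lemma bb_G_zero_M {p : ℤ} (hp0 : p ≠ 0) : ∃ c ≠ (0 : ℂ), bb (.G 0) (.M p) = c • e (.M (p + 1)) := by
  rcases Int.emod_two_eq_zero_or_one p with hp | hp
  · exact ⟨(p : ℂ) / 4, div_ne_zero (by exact_mod_cast hp0) (by norm_num), by simp [bb, hp]⟩
  · exact ⟨2, two_ne_zero, by simp [bb, hp]⟩

namespace TsnsRep

variable (r : TsnsRep W) {v : W}

lemma apply_eq_zero_of_bb_eq_smul {a x z : B} {c : ℂ} (hbb : bb a x = c • e z) (hc : c ≠ 0)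
    (ha : r.ρ a v = 0) (hx : r.ρ x v = 0) : r.ρ z v = 0 := by
  have h := congrArg (fun f => f v) (r.compat a x)
  simp only [hbb, ext_smul_e, LinearMap.sub_apply, Module.End.mul_apply, LinearMap.smul_apply,
    hx, ha, map_zero, smul_zero, sub_zero] at h
  exact (smul_eq_zero.mp h).resolve_left hc

lemma Y_apply_eq_zero_of_le (hG : r.ρ (.G 0) v = 0) {m : ℤ} (hm : r.ρ (.Y m) v = 0) :
    ∀ p, m ≤ p → r.ρ (.Y p) v = 0 := by
  refine Int.leInduction hm fun p _ ih => ?_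
  obtain ⟨c, hc, hbb⟩ := bb_G_zero_Y p
  exact r.apply_eq_zero_of_bb_eq_smul hbb hc hG ih

lemma M_apply_eq_zero_of_le (hG : r.ρ (.G 0) v = 0) {m : ℤ} (hm0 : 0 < m)
    (hm : r.ρ (.M m) v = 0) : ∀ p, m ≤ p → r.ρ (.M p) v = 0 := by
  refine Int.leInduction hm fun p hmp ih => ?_
  obtain ⟨c, hc, hbb⟩ := bb_G_zero_M (by omega : p ≠ 0)
  exact r.apply_eq_zero_of_bb_eq_smul hbb hc hG ih

end TsnsRep

/-- if G_{1/2}v = Y_{1/2}v = M_{1/2}v = 0 then Y_p v = M_p v = 0 for all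
p ∈ (1/2)ℤ with p > 0. (Here `.Y p` denotes Y_{p/2}, `.G 0` denotes G_{1/2}.) -/
theorem positive_YM_kill {W : Type} [AddCommGroup W] [Module ℂ W] (r : TsnsRep W)
    (v : W) (hG : r.ρ (.G 0) v = 0) (hY : r.ρ (.Y 1) v = 0) (hM : r.ρ (.M 1) v = 0) :
    ∀ p : ℤ, 0 < p → r.ρ (.Y p) v = 0 ∧ r.ρ (.M p) v = 0 :=
  fun p hp => ⟨r.Y_apply_eq_zero_of_le hG hY p hp, r.M_apply_eq_zero_of_le hG one_pos hM p hp⟩
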